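/- arXiv:2503.14215 — 2 statements merged into one kernel-verified Lean document; each statement's English description precedes it below -/
import Mathlib

section
/- Under the hypotheses of the previous lemma (φ positive bounded solution of the ODE), the limit L = lim_{t→∞} φ(t) exists, φ' > 0 on ℝ⁺, and lim_{t→∞} φ'(t) = 0. -/
open Filter Set Topology

/-!
The equation is the first-order system `(φ, φ')' = (φ', -f(φ) (1 + φ'²)^{3/2})`, which is
reversible: it is invariant under `t ↦ 2t₀ - t`, `(φ, φ') ↦ (φ, -φ')`. If `φ'` vanished at some
`t₀ > 0`, uniqueness for the system would make `φ` symmetric about `t₀`, so `φ(2t₀) = φ(0) = 0`,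
against positivity. Hence `φ` is increasing and, being bounded, converges to some `L`.
The energy `F(φ) - (1 + φ'²)^{-1/2}` with `F' = f` is conserved, so `(1 + φ'²)^{-1/2}` converges
as well; its limit is `1`, since otherwise `φ'` would stay bounded away from `0` and `φ` would be
unbounded. Thus `φ' → 0`.
-/

theorem eqOn_Icc_of_hasDerivAt_of_contDiff {E : Type*} [NormedAddCommGroup E] [NormedSpace ℝ E]
    {V : E → E} (hV : ContDiff ℝ 1 V) {x y : ℝ → E} {a b : ℝ}
    (hxc : ContinuousOn x (Icc a b)) (hx : ∀ t ∈ Ico a b, HasDerivAt x (V (x t)) t)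
    (hyc : ContinuousOn y (Icc a b)) (hy : ∀ t ∈ Ico a b, HasDerivAt y (V (y t)) t)
    (ha : x a = y a) : EqOn x y (Icc a b) := by
  obtain ⟨K, hK⟩ := hV.locallyLipschitz.locallyLipschitzOn.exists_lipschitzOnWith_of_compact
    ((isCompact_Icc.image_of_continuousOn hxc).union (isCompact_Icc.image_of_continuousOn hyc))
  exact ODE_solution_unique_of_mem_Icc_right (fun _ _ ↦ hK) hxc
    (fun t ht ↦ (hx t ht).hasDerivWithinAt)
    (fun t ht ↦ .inl (mem_image_of_mem x (Ico_subset_Icc_self ht))) hyc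
    (fun t ht ↦ (hy t ht).hasDerivWithinAt)
    (fun t ht ↦ .inr (mem_image_of_mem y (Ico_subset_Icc_self ht))) ha

section Reversible

variable {A : ℝ × ℝ → ℝ} {φ : ℝ → ℝ} {a : ℝ}

theorem apply_two_mul_sub_eq_of_deriv_eq_zero (hA : ContDiff ℝ 1 A)
    (hA_even : ∀ x v, A (x, -v) = A (x, v)) (hφ : Differentiable ℝ φ)
    (hφ' : Continuous (deriv φ)) (hode : ∀ t > a, HasDerivAt (deriv φ) (A (φ t, deriv φ t)) t)
    {t₀ : ℝ} (ht₀ : a < t₀) (hφt₀ : deriv φ t₀ = 0) :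
    φ (2 * t₀ - a) = φ a := by
  have hV : ContDiff ℝ 1 fun p : ℝ × ℝ ↦ (p.2, A p) := contDiff_snd.prodMk hA
  have hrefl : ∀ t, HasDerivAt (fun s ↦ 2 * t₀ - s) (-1) t := fun t ↦ by
    simpa using (hasDerivAt_id t).const_sub (2 * t₀)
  have hsymm := eqOn_Icc_of_hasDerivAt_of_contDiff hV (a := t₀) (b := 2 * t₀ - a)
    (x := fun t ↦ (φ t, deriv φ t)) (y := fun t ↦ (φ (2 * t₀ - t), -deriv φ (2 * t₀ - t)))
    (hφ.continuous.prodMk hφ').continuousOn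
    (fun t ht ↦ (hφ t).hasDerivAt.prodMk (hode t (by linarith [ht.1])))
    (hφ.continuous.comp (continuous_const.sub continuous_id) |>.prodMk
      (hφ'.comp (continuous_const.sub continuous_id)).neg).continuousOn
    (fun t ht ↦ by
      have hs : a < 2 * t₀ - t := by linarith [ht.2]
      have hd : HasDerivAt (fun s ↦ (φ (2 * t₀ - s), -deriv φ (2 * t₀ - s)))
          (deriv φ (2 * t₀ - t) * -1, -(A (φ (2 * t₀ - t), deriv φ (2 * t₀ - t)) * -1)) t :=
        ((hφ _).hasDerivAt.comp t (hrefl t)).prodMk ((hode _ hs).comp t (hrefl t)).neg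
      exact hd.congr_deriv (by simp [hA_even]))
    (by simp [two_mul, hφt₀])
  simpa using congrArg Prod.fst (hsymm ⟨by linarith, le_rfl⟩)

theorem deriv_pos_of_reversible (hA : ContDiff ℝ 1 A) (hA_even : ∀ x v, A (x, -v) = A (x, v))
    (hφ : Differentiable ℝ φ) (hφ' : Continuous (deriv φ))
    (hode : ∀ t > 0, HasDerivAt (deriv φ) (A (φ t, deriv φ t)) t)
    (hφ0 : φ 0 = 0) (hφ'0 : 0 < deriv φ 0) (hpos : ∀ t > 0, 0 < φ t) :
    ∀ t > 0, 0 < deriv φ t := by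
  by_contra! ⟨t₁, ht₁, hφt₁⟩
  obtain ⟨t₀, ⟨ht₀, -⟩, hφt₀⟩ :=
    intermediate_value_Icc' ht₁.le hφ'.continuousOn ⟨hφt₁, hφ'0.le⟩
  have ht₀ : 0 < t₀ := ht₀.lt_of_ne (by rintro rfl; exact hφ'0.ne' hφt₀)
  have := apply_two_mul_sub_eq_of_deriv_eq_zero hA hA_even hφ hφ' hode ht₀ hφt₀
  linarith [hpos (2 * t₀ - 0) (by linarith)]

end Reversible

theorem exists_tendsto_atTop_of_monotoneOn_Ici {φ : ℝ → ℝ} {a M : ℝ}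
    (hmono : MonotoneOn φ (Ici a)) (hbdd : ∀ t ≥ a, φ t ≤ M) :
    ∃ L, Tendsto φ atTop (𝓝 L) := by
  have hψ : Monotone fun t ↦ φ (max t a) := fun s t hst ↦
    hmono (le_max_right s a) (le_max_right t a) (max_le_max hst le_rfl)
  refine ⟨_, (tendsto_atTop_ciSup hψ ⟨M, ?_⟩).congr' ?_⟩
  · rintro _ ⟨t, rfl⟩
    exact hbdd _ (le_max_right t a)
  · filter_upwards [eventually_ge_atTop a] with t ht
    rw [max_eq_left ht]

theorem tendsto_atTop_of_eventually_le_deriv {φ : ℝ → ℝ} (hφ : Differentiable ℝ φ) {δ : ℝ}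
    (hδ : 0 < δ) (h : ∀ᶠ t in atTop, δ ≤ deriv φ t) : Tendsto φ atTop atTop := by
  obtain ⟨T, hT⟩ := h.exists_forall_of_atTop
  have hlin : Tendsto (fun t ↦ φ T + δ * (t - T)) atTop atTop :=
    tendsto_atTop_add_const_left _ _
      ((tendsto_atTop_add_const_right _ _ tendsto_id).const_mul_atTop hδ)
  refine tendsto_atTop_mono' _ ?_ hlin
  filter_upwards [eventually_ge_atTop T] with t ht
  have := (convex_Ici T).mul_sub_le_image_sub_of_le_deriv hφ.continuous.continuousOn
    hφ.differentiableOn (fun s hs ↦ hT s (interior_subset hs)) T self_mem_Ici t ht ht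
  linarith

theorem one_le_of_tendsto_inv_sqrt_one_add_deriv_sq {φ : ℝ → ℝ} {L c : ℝ}
    (hφ : Differentiable ℝ φ) (hL : Tendsto φ atTop (𝓝 L)) (hφ' : ∀ᶠ t in atTop, 0 ≤ deriv φ t)
    (hc : Tendsto (fun t ↦ (√(1 + deriv φ t ^ 2))⁻¹) atTop (𝓝 c)) : 1 ≤ c := by
  by_contra! hc1
  have hc0 : 0 ≤ c := ge_of_tendsto' hc fun t ↦ by positivity
  obtain ⟨q, hcq, hq1⟩ := exists_between hc1
  have hq : 0 < q := hc0.trans_lt hcq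
  have hδ : 0 < q⁻¹ - 1 := sub_pos.2 ((one_lt_inv₀ hq).2 hq1)
  refine not_tendsto_nhds_of_tendsto_atTop (tendsto_atTop_of_eventually_le_deriv hφ hδ ?_) L hL
  filter_upwards [hc.eventually_lt_const hcq, hφ'] with t hlt hnn
  have hsqrt : √(1 + deriv φ t ^ 2) ≤ 1 + deriv φ t :=
    Real.sqrt_le_iff.2 ⟨by positivity, by nlinarith⟩
  have : q⁻¹ < 1 + deriv φ t :=
    (inv_lt_comm₀ (by positivity) hq).1 hlt |>.trans_le hsqrt
  linarith

theorem tendsto_zero_of_tendsto_inv_sqrt_one_add_sq {α : Type*} {l : Filter α} {u : α → ℝ}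
    (h : Tendsto (fun a ↦ (√(1 + u a ^ 2))⁻¹) l (𝓝 1)) : Tendsto u l (𝓝 0) := by
  have h1 : Tendsto (fun a ↦ √(1 + u a ^ 2)) l (𝓝 1) := by simpa using h.inv₀ one_ne_zero
  have h2 : Tendsto (fun a ↦ u a ^ 2) l (𝓝 0) := by
    have hsq : ∀ a, √(1 + u a ^ 2) ^ 2 - 1 = u a ^ 2 := fun a ↦ by
      rw [Real.sq_sqrt (by positivity)]
      ring
    simpa only [hsq, one_pow, sub_self] using (h1.pow 2).sub_const 1
  rw [tendsto_zero_iff_abs_tendsto_zero]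
  simpa only [Real.sqrt_zero, Function.comp_def, Real.sqrt_sq_eq_abs] using
    (Real.continuous_sqrt.tendsto 0).comp h2

/-- In terms of `curvatureField f`, the equation `φ'' / (1 + φ'²)^{3/2} + f(φ) = 0` reads
`φ'' = curvatureField f (φ, φ')`. -/
noncomputable def curvatureField (f : ℝ → ℝ) (p : ℝ × ℝ) : ℝ :=
  -f p.1 * ((1 + p.2 ^ 2) * √(1 + p.2 ^ 2))

section CurvatureField

variable {f : ℝ → ℝ}

theorem contDiff_curvatureField (hf : ContDiff ℝ 1 f) : ContDiff ℝ 1 (curvatureField f) := by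
  have hq : ContDiff ℝ 1 fun p : ℝ × ℝ ↦ 1 + p.2 ^ 2 := by fun_prop
  exact (hf.comp contDiff_fst).neg.mul (hq.mul (hq.sqrt fun p ↦ by positivity))

theorem curvatureField_neg_snd (x v : ℝ) : curvatureField f (x, -v) = curvatureField f (x, v) := by
  simp [curvatureField]

theorem deriv_deriv_eq_curvatureField {φ : ℝ → ℝ} {t : ℝ}
    (h : deriv (deriv φ) t / ((1 + deriv φ t ^ 2) * √(1 + deriv φ t ^ 2)) + f (φ t) = 0) :
    deriv (deriv φ) t = curvatureField f (φ t, deriv φ t) := by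
  have hne : (1 + deriv φ t ^ 2) * √(1 + deriv φ t ^ 2) ≠ 0 := by positivity
  rw [div_add' _ _ _ hne, div_eq_zero_iff] at h
  simp only [curvatureField]
  linarith [h.resolve_right hne]

theorem hasDerivAt_energy {F φ φ' : ℝ → ℝ} {t : ℝ} (hF : HasDerivAt F (f (φ t)) (φ t))
    (hφ : HasDerivAt φ (φ' t) t) (hφ' : HasDerivAt φ' (curvatureField f (φ t, φ' t)) t) :
    HasDerivAt (fun s ↦ F (φ s) - (√(1 + φ' s ^ 2))⁻¹) 0 t := by
  have hu : 0 < 1 + φ' t ^ 2 := by positivity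
  have hsq := (((hφ'.fun_pow 2).const_add 1).sqrt hu.ne').inv (by positivity)
  refine ((hF.comp t hφ).sub hsq).congr_deriv ?_
  simp only [curvatureField, Real.sq_sqrt hu.le]
  field_simp
  ring

theorem exists_tendsto_inv_sqrt_one_add_deriv_sq (hf : Continuous f) {φ : ℝ → ℝ} {L : ℝ}
    (hφ : Differentiable ℝ φ)
    (hode : ∀ t > 0, HasDerivAt (deriv φ) (curvatureField f (φ t, deriv φ t)) t)
    (hL : Tendsto φ atTop (𝓝 L)) :
    ∃ c, Tendsto (fun t ↦ (√(1 + deriv φ t ^ 2))⁻¹) atTop (𝓝 c) := by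
  set F : ℝ → ℝ := fun z ↦ ∫ u in (0 : ℝ)..z, f u
  have hF : ∀ z, HasDerivAt F (f z) z := fun z ↦ (hf.integral_hasStrictDerivAt 0 z).hasDerivAt
  have hE : ∀ t ∈ Ioi (0 : ℝ), HasDerivAt (fun s ↦ F (φ s) - (√(1 + deriv φ s ^ 2))⁻¹) 0 t :=
    fun t ht ↦ hasDerivAt_energy (hF _) (hφ t).hasDerivAt (hode t ht)
  obtain ⟨E, hEconst⟩ := isOpen_Ioi.exists_is_const_of_deriv_eq_zero isPreconnected_Ioi
    (fun t ht ↦ (hE t ht).differentiableAt.differentiableWithinAt) fun t ht ↦ (hE t ht).deriv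
  refine ⟨F L - E, ((hF L).continuousAt.tendsto.comp hL |>.sub_const E).congr' ?_⟩
  filter_upwards [eventually_gt_atTop 0] with t ht
  have := hEconst t ht
  simp only [Function.comp_apply] at this ⊢
  linarith

end CurvatureField

/-- for a positive bounded solution `φ` of the ODE, the limit
`L = lim_{t→∞} φ(t)` exists, `φ' > 0` on `ℝ⁺` and `φ'(t) → 0` as `t → ∞`. -/
theorem statement10 (f φ : ℝ → ℝ)
    (hf : ContDiff ℝ 1 f) (hφ : ContDiff ℝ 2 φ)
    (hode : ∀ t > (0 : ℝ),
      deriv (deriv φ) t /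
          ((1 + (deriv φ t) ^ 2) * Real.sqrt (1 + (deriv φ t) ^ 2)) + f (φ t) = 0)
    (h0 : φ 0 = 0) (h1 : deriv φ 0 = 1)
    (hpos : ∀ t > (0 : ℝ), 0 < φ t)
    (hbdd : ∃ M, ∀ t ≥ (0 : ℝ), φ t ≤ M) :
    ∃ L : ℝ, Tendsto φ atTop (nhds L) ∧
      (∀ t > (0 : ℝ), 0 < deriv φ t) ∧
      Tendsto (deriv φ) atTop (nhds 0) := by
  obtain ⟨M, hM⟩ := hbdd
  have hφd : Differentiable ℝ φ := hφ.differentiable (by norm_num)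
  have hφ'd : Differentiable ℝ (deriv φ) :=
    ((contDiff_succ_iff_deriv (n := 1)).1 hφ).2.2.differentiable (by norm_num)
  have hode' : ∀ t > 0, HasDerivAt (deriv φ) (curvatureField f (φ t, deriv φ t)) t :=
    fun t ht ↦ deriv_deriv_eq_curvatureField (hode t ht) ▸ (hφ'd t).hasDerivAt
  have hφ'pos := deriv_pos_of_reversible (contDiff_curvatureField hf) curvatureField_neg_snd
    hφd hφ'd.continuous hode' h0 (h1 ▸ one_pos) hpos
  have hmono : MonotoneOn φ (Ici 0) := (strictMonoOn_of_deriv_pos (convex_Ici 0)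
    hφd.continuous.continuousOn fun t ht ↦ hφ'pos t (by simpa using ht)).monotoneOn
  obtain ⟨L, hL⟩ := exists_tendsto_atTop_of_monotoneOn_Ici hmono hM
  obtain ⟨c, hc⟩ := exists_tendsto_inv_sqrt_one_add_deriv_sq hf.continuous hφd hode' hL
  have hc1 : c = 1 := le_antisymm
    (le_of_tendsto' hc fun t ↦ inv_le_one_of_one_le₀ (Real.one_le_sqrt.2 (by nlinarith)))
    (one_le_of_tendsto_inv_sqrt_one_add_deriv_sq hφd hL
      ((eventually_gt_atTop 0).mono fun t ht ↦ (hφ'pos t ht).le) hc)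
  exact ⟨L, hL, hφ'pos, tendsto_zero_of_tendsto_inv_sqrt_one_add_sq (hc1 ▸ hc)⟩
end

section
/- If v : Ω → ℝ is C² on a connected open Ω ⊂ ℝⁿ, harmonic (Δv = 0), and satisfies |∇v|² ≡ 1, then v(x) = a·x + b for some unit vector a ∈ ℝⁿ and b ∈ ℝ. -/
/-!
Let `g = ∇v` and `A = Dg`, a symmetric field of endomorphisms with `tr A = Δv = 0`.
Differentiating `‖g‖² = 1` gives `A g = 0`, so by Grönwall `g` is constant along every ray
`t ↦ y + t g(y)`. Hence `g ∘ (id + s g) = g` near `x` for small `s ≥ 0`, and differentiating,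
`A(x + s g(x)) (1 + s A(x)) = A(x)`. Taking traces, `tr (A(x + s g(x)) A(x)) = 0` for `s > 0`;
letting `s → 0` gives `tr (A(x)²) = 0`, which forces `A(x) = 0` since `A(x)` is symmetric.
So `∇v` is constant on the connected set `Ω` and `v` is affine there.
-/
noncomputable section

/-- Partial derivative `u_i` of `u : ℝⁿ → ℝ` in the `i`-th coordinate direction. -/
noncomputable def pd {n : ℕ} (u : EuclideanSpace ℝ (Fin n) → ℝ) (i : Fin n)
    (x : EuclideanSpace ℝ (Fin n)) : ℝ :=
  fderiv ℝ u x (EuclideanSpace.single i 1)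

/-- `|∇u(x)|²`. -/
noncomputable def gradSq {n : ℕ} (u : EuclideanSpace ℝ (Fin n) → ℝ)
    (x : EuclideanSpace ℝ (Fin n)) : ℝ :=
  ∑ i, (pd u i x) ^ 2

/-- The minimal-surface/mean-curvature operator `div(∇u/√(1+|∇u|²))`. -/
noncomputable def mcOp {n : ℕ} (u : EuclideanSpace ℝ (Fin n) → ℝ)
    (x : EuclideanSpace ℝ (Fin n)) : ℝ :=
  ∑ i, pd (fun y => pd u i y / Real.sqrt (1 + gradSq u y)) i x

/-- The P-function `P(x) = F(u(x)) - (1+|∇u(x)|²)^{-1/2}`. -/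
noncomputable def Pfun {n : ℕ} (F : ℝ → ℝ) (u : EuclideanSpace ℝ (Fin n) → ℝ)
    (x : EuclideanSpace ℝ (Fin n)) : ℝ :=
  F (u x) - 1 / Real.sqrt (1 + gradSq u x)

open Set Filter Metric InnerProductSpace
open scoped Topology RealInnerProductSpace Gradient Laplacian

section Rays

variable {E : Type*} [NormedAddCommGroup E] [NormedSpace ℝ E] {g : E → E} {Ω : Set E}

theorem apply_add_smul_self_eq_of_fderiv_apply_self_eq_zero (hΩ : IsOpen Ω)
    (hg : ContDiffOn ℝ 1 g Ω) (hg0 : ∀ z ∈ Ω, fderiv ℝ g z (g z) = 0) {y : E} {s : ℝ}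
    (hray : ∀ t ∈ Icc 0 s, y + t • g y ∈ Ω) : ∀ t ∈ Icc 0 s, g (y + t • g y) = g y := by
  set c := g y
  have hγ : Continuous fun t : ℝ => y + t • c := by fun_prop
  obtain ⟨M, hM⟩ := (isCompact_Icc.image hγ).exists_bound_of_continuousOn
    ((hg.continuousOn_fderiv_of_isOpen hΩ le_rfl).mono (image_subset_iff.2 hray))
  have hdiff : ∀ t ∈ Icc 0 s, HasFDerivAt g (fderiv ℝ g (y + t • c)) (y + t • c) := fun t ht =>
    ((hg.differentiableOn one_ne_zero).differentiableAt (hΩ.mem_nhds (hray t ht))).hasFDerivAt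
  intro t ht
  refine sub_eq_zero.1 <| eq_zero_of_abs_deriv_le_mul_abs_self_of_eq_zero_right
    (f := fun t => g (y + t • c) - c) (f' := fun t => fderiv ℝ g (y + t • c) c) (K := M)
    ?_ (fun t ht => ?_) (by simp [c]) (fun t ht => ?_) t ht
  · exact (hg.continuousOn.comp hγ.continuousOn hray).sub continuousOn_const
  · have hline : HasDerivAt (fun t : ℝ => y + t • c) c t := by
      simpa using ((hasDerivAt_id t).smul_const c).const_add y
    simpa using ((hdiff t (Ico_subset_Icc_self ht)).comp_hasDerivAt t hline).sub_const c
      |>.hasDerivWithinAt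
  · have h0 := hg0 _ (hray t (Ico_subset_Icc_self ht))
    calc ‖fderiv ℝ g (y + t • c) c‖ = ‖fderiv ℝ g (y + t • c) (g (y + t • c) - c)‖ := by
          rw [map_sub, h0, zero_sub, norm_neg]
      _ ≤ M * ‖g (y + t • c) - c‖ :=
          (ContinuousLinearMap.le_opNorm _ _).trans (mul_le_mul_of_nonneg_right
            (hM _ (mem_image_of_mem _ (Ico_subset_Icc_self ht))) (norm_nonneg _))

theorem eventually_apply_add_smul_self_eventuallyEq (hΩ : IsOpen Ω) (hg : ContDiffOn ℝ 1 g Ω)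
    (hg0 : ∀ z ∈ Ω, fderiv ℝ g z (g z) = 0) (hg1 : ∀ z ∈ Ω, ‖g z‖ ≤ 1) {x : E} (hx : x ∈ Ω) :
    ∀ᶠ s in 𝓝[≥] (0 : ℝ), (fun y => g (y + s • g y)) =ᶠ[𝓝 x] g := by
  obtain ⟨R, hR, hball⟩ := Metric.isOpen_iff.1 hΩ x hx
  filter_upwards [Ico_mem_nhdsGE (half_pos hR)] with s hs
  filter_upwards [ball_mem_nhds x (half_pos hR)] with y hy
  refine apply_add_smul_self_eq_of_fderiv_apply_self_eq_zero hΩ hg hg0 (fun t ht => hball ?_) s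
    ⟨hs.1, le_rfl⟩
  have hyΩ : y ∈ Ω := hball (ball_subset_ball (half_le_self hR.le) hy)
  calc dist (y + t • g y) x ≤ ‖t • g y‖ + dist y x := by
        simpa [dist_eq_norm, add_sub_right_comm, add_comm] using norm_add_le (t • g y) (y - x)
    _ ≤ t + dist y x := by
        rw [norm_smul, Real.norm_of_nonneg ht.1]
        gcongr
        exact mul_le_of_le_one_right ht.1 (hg1 y hyΩ)
    _ < R := by linarith [ht.2, hs.2, mem_ball.1 hy]

theorem fderiv_comp_one_add_smul_eq_of_eventuallyEq {x : E} {s : ℝ}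
    (hx : DifferentiableAt ℝ g x) (hxs : DifferentiableAt ℝ g (x + s • g x))
    (heq : (fun y => g (y + s • g y)) =ᶠ[𝓝 x] g) :
    (fderiv ℝ g (x + s • g x)).comp (1 + s • fderiv ℝ g x) = fderiv ℝ g x := by
  have hflow : HasFDerivAt (fun y => y + s • g y) (1 + s • fderiv ℝ g x) x :=
    (hasFDerivAt_id x).add (hx.hasFDerivAt.const_smul s)
  exact ((hxs.hasFDerivAt.comp x hflow).congr_of_eventuallyEq heq.symm).fderiv.symm

end Rays

section Trace

variable {E : Type*} [NormedAddCommGroup E] [InnerProductSpace ℝ E] [FiniteDimensional ℝ E]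

theorem LinearMap.IsSymmetric.eq_zero_of_trace_mul_self_eq_zero {B : E →ₗ[ℝ] E}
    (hB : B.IsSymmetric) (h : LinearMap.trace ℝ E (B * B) = 0) : B = 0 := by
  set b := stdOrthonormalBasis ℝ E
  rw [LinearMap.trace_eq_sum_inner _ b] at h
  simp only [Module.End.mul_apply, ← hB _ (B _), real_inner_self_eq_norm_sq] at h
  have hbasis : ∀ i, B (b i) = 0 := fun i => norm_eq_zero.1 <| pow_eq_zero_iff two_ne_zero |>.1 <|
    (Finset.sum_eq_zero_iff_of_nonneg fun i _ => sq_nonneg _).1 h i (Finset.mem_univ i)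
  exact b.toBasis.ext fun i => by simpa using hbasis i

theorem ContinuousLinearMap.eq_zero_of_tendsto_of_comp_one_add_smul_eq {B : E →L[ℝ] E}
    (hB : (B : E →ₗ[ℝ] E).IsSymmetric) (htrB : LinearMap.trace ℝ E B = 0) {C : ℝ → E →L[ℝ] E}
    (hC : Tendsto C (𝓝[>] 0) (𝓝 B))
    (hcomp : ∀ᶠ s in 𝓝[>] 0, (C s).comp (1 + s • B) = B ∧ LinearMap.trace ℝ E (C s) = 0) :
    B = 0 := by
  let τ : (E →L[ℝ] E) →ₗ[ℝ] ℝ := (LinearMap.trace ℝ E).comp (ContinuousLinearMap.coeLM ℝ)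
  have hzero : ∀ᶠ s in 𝓝[>] 0, τ ((C s).comp B) = 0 := by
    filter_upwards [hcomp, self_mem_nhdsWithin] with s ⟨hs, htr⟩ (hpos : 0 < s)
    have hsum := congrArg τ hs
    rw [comp_add, one_def, comp_id, comp_smul, map_add, map_smul, smul_eq_mul] at hsum
    change LinearMap.trace ℝ E (C s) + _ = LinearMap.trace ℝ E B at hsum
    rw [htr, htrB, zero_add] at hsum
    exact (mul_eq_zero.1 hsum).resolve_left hpos.ne'
  have hlim : Tendsto (fun s => τ ((C s).comp B)) (𝓝[>] 0) (𝓝 (τ (B.comp B))) :=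
    (τ.continuous_of_finiteDimensional.tendsto _).comp
      (((continuous_id.clm_comp_const B).tendsto B).comp hC)
  have hBB : LinearMap.trace ℝ E (B * B) = 0 :=
    tendsto_nhds_unique hlim (tendsto_const_nhds.congr' (hzero.mono fun _ h => h.symm))
  exact coe_injective (hB.eq_zero_of_trace_mul_self_eq_zero hBB)

end Trace

theorem HasFDerivAt.inner_apply_eq_zero_of_eventually_norm_eq {E F : Type*}
    [NormedAddCommGroup E] [NormedSpace ℝ E] [NormedAddCommGroup F] [InnerProductSpace ℝ F]
    {g : E → F} {L : E →L[ℝ] F} {x : E} {c : ℝ} (hg : HasFDerivAt g L x)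
    (hc : ∀ᶠ y in 𝓝 x, ‖g y‖ = c) (u : E) : ⟪g x, L u⟫ = 0 := by
  have h0 : HasFDerivAt (fun y => ‖g y‖ ^ 2) (0 : E →L[ℝ] ℝ) x :=
    (hasFDerivAt_const (c ^ 2) x).congr_of_eventuallyEq (hc.mono fun y hy => congrArg (· ^ 2) hy)
  simpa using congrArg (· u) (hg.norm_sq.unique h0)

section Gradient

variable {E : Type*} [NormedAddCommGroup E] [InnerProductSpace ℝ E] [CompleteSpace E]
  {v : E → ℝ} {x : E}

theorem ContDiffAt.gradient {n : WithTop ℕ∞} (hv : ContDiffAt ℝ (n + 1) v x) :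
    ContDiffAt ℝ n (∇ v) x :=
  (toDual ℝ E).symm.toContinuousLinearEquiv.contDiff.contDiffAt.comp x (hv.fderiv_right le_rfl)

theorem inner_fderiv_gradient_apply (u w : E) :
    ⟪fderiv ℝ (∇ v) x u, w⟫ = fderiv ℝ (fderiv ℝ v) x u w := by
  have : ∇ v = (toDual ℝ E).symm.toContinuousLinearEquiv ∘ fderiv ℝ v := rfl
  rw [this, ContinuousLinearEquiv.comp_fderiv]
  exact toDual_symm_apply

theorem ContDiffAt.isSymmetric_fderiv_gradient (hv : ContDiffAt ℝ 2 v x) :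
    (fderiv ℝ (∇ v) x : E →ₗ[ℝ] E).IsSymmetric := fun u w => by
  rw [ContinuousLinearMap.coe_coe, real_inner_comm _ u, inner_fderiv_gradient_apply,
    inner_fderiv_gradient_apply]
  exact hv.isSymmSndFDerivAt (by simp [minSmoothness_of_isRCLikeNormedField]) u w

theorem laplacian_eq_trace_fderiv_gradient [FiniteDimensional ℝ E] (v : E → ℝ) (x : E) :
    Δ v x = LinearMap.trace ℝ E (fderiv ℝ (∇ v) x) := by
  rw [laplacian_eq_iteratedFDeriv_stdOrthonormalBasis,
    LinearMap.trace_eq_sum_inner _ (stdOrthonormalBasis ℝ E)]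
  refine Finset.sum_congr rfl fun i _ => ?_
  rw [iteratedFDeriv_two_apply, real_inner_comm, ContinuousLinearMap.coe_coe,
    inner_fderiv_gradient_apply]
  rfl

theorem ContDiffAt.fderiv_gradient_apply_gradient_eq_zero (hv : ContDiffAt ℝ 2 v x)
    (hnorm : ∀ᶠ y in 𝓝 x, ‖∇ v y‖ = 1) : fderiv ℝ (∇ v) x (∇ v x) = 0 := by
  have hA := ((hv.gradient (n := 1)).differentiableAt one_ne_zero).hasFDerivAt
  apply (inner_self_eq_zero (𝕜 := ℝ)).1
  have hsymm := hv.isSymmetric_fderiv_gradient (∇ v x) (fderiv ℝ (∇ v) x (∇ v x))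
  rw [ContinuousLinearMap.coe_coe] at hsymm
  rw [hsymm]
  exact hA.inner_apply_eq_zero_of_eventually_norm_eq hnorm _

variable [FiniteDimensional ℝ E] {Ω : Set E}

theorem InnerProductSpace.HarmonicOnNhd.fderiv_gradient_eq_zero (hΩ : IsOpen Ω)
    (hv : HarmonicOnNhd v Ω) (hnorm : ∀ z ∈ Ω, ‖∇ v z‖ = 1) (hx : x ∈ Ω) :
    fderiv ℝ (∇ v) x = 0 := by
  have hC1 : ContDiffOn ℝ 1 (∇ v) Ω := fun z hz => (hv z hz).1.gradient.contDiffWithinAt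
  have hdiff : ∀ z ∈ Ω, DifferentiableAt ℝ (∇ v) z := fun z hz =>
    (hC1.differentiableOn one_ne_zero).differentiableAt (hΩ.mem_nhds hz)
  have hkernel : ∀ z ∈ Ω, fderiv ℝ (∇ v) z (∇ v z) = 0 := fun z hz =>
    (hv z hz).1.fderiv_gradient_apply_gradient_eq_zero (eventually_of_mem (hΩ.mem_nhds hz) hnorm)
  have htrace : ∀ z ∈ Ω, LinearMap.trace ℝ E (fderiv ℝ (∇ v) z) = 0 := fun z hz => by
    rw [← laplacian_eq_trace_fderiv_gradient]
    exact (hv z hz).2.self_of_nhds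
  have hray : Tendsto (fun s : ℝ => x + s • ∇ v x) (𝓝[>] 0) (𝓝 x) :=
    (Continuous.tendsto' (by fun_prop) 0 x (by simp)).mono_left nhdsWithin_le_nhds
  have hflow := eventually_apply_add_smul_self_eventuallyEq hΩ hC1 hkernel
    (fun z hz => (hnorm z hz).le) hx
  refine ContinuousLinearMap.eq_zero_of_tendsto_of_comp_one_add_smul_eq
    (hv x hx).1.isSymmetric_fderiv_gradient (htrace x hx)
    (((hC1.continuousOn_fderiv_of_isOpen hΩ le_rfl).continuousAt (hΩ.mem_nhds hx)).tendsto.comp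
      hray) ?_
  filter_upwards [hflow.filter_mono (nhdsWithin_mono _ Ioi_subset_Ici_self),
    hray.eventually (hΩ.mem_nhds hx)] with s hs hsΩ
  exact ⟨fderiv_comp_one_add_smul_eq_of_eventuallyEq (hdiff x hx) (hdiff _ hsΩ) hs,
    htrace _ hsΩ⟩

theorem InnerProductSpace.HarmonicOnNhd.exists_eq_inner_add_of_norm_gradient_eq_one
    (hΩ : IsOpen Ω) (hΩc : IsPreconnected Ω) (hv : HarmonicOnNhd v Ω)
    (hnorm : ∀ z ∈ Ω, ‖∇ v z‖ = 1) :
    ∃ (a : E) (b : ℝ), (∀ z ∈ Ω, ∇ v z = a) ∧ ∀ z ∈ Ω, v z = ⟪a, z⟫ + b := by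
  have hdiff : ∀ z ∈ Ω, DifferentiableAt ℝ v z := fun z hz =>
    (hv z hz).1.differentiableAt two_ne_zero
  have hC1 : ContDiffOn ℝ 1 (∇ v) Ω := fun z hz => (hv z hz).1.gradient.contDiffWithinAt
  obtain ⟨a, ha⟩ := hΩ.exists_is_const_of_fderiv_eq_zero hΩc (hC1.differentiableOn one_ne_zero)
    fun z hz => hv.fderiv_gradient_eq_zero hΩ hnorm hz
  obtain ⟨b, hb⟩ := hΩ.exists_eq_add_of_fderiv_eq hΩc
    (fun z hz => (hdiff z hz).differentiableWithinAt)
    (innerSL ℝ a).differentiable.differentiableOn fun z hz => by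
      ext u
      rw [(innerSL ℝ a).fderiv, ← ha z hz, innerSL_apply_apply, gradient, toDual_symm_apply]
  exact ⟨a, b, ha, fun z hz => hb hz⟩

end Gradient

section Coordinates

variable {n : ℕ} {u : EuclideanSpace ℝ (Fin n) → ℝ} {x : EuclideanSpace ℝ (Fin n)}

theorem pd_eq_gradient_apply (i : Fin n) : pd u i x = ∇ u x i := by
  rw [pd, gradient, ← toDual_symm_apply, EuclideanSpace.inner_single_right]
  simp

theorem gradSq_eq_norm_gradient_sq : gradSq u x = ‖∇ u x‖ ^ 2 := by
  simp [gradSq, pd_eq_gradient_apply, EuclideanSpace.norm_sq_eq]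

theorem laplacian_eq_sum_pd_pd (hu : ContDiffAt ℝ 2 u x) : Δ u x = ∑ i, pd (pd u i) i x := by
  have hd : DifferentiableAt ℝ (fderiv ℝ u) x :=
    (hu.fderiv_right (m := 1) le_rfl).differentiableAt one_ne_zero
  rw [laplacian_eq_iteratedFDeriv_orthonormalBasis u (EuclideanSpace.basisFun (Fin n) ℝ)]
  refine Finset.sum_congr rfl fun i _ => ?_
  have hpd : pd u i = fun y => fderiv ℝ u y (EuclideanSpace.single i 1) := rfl
  rw [pd, hpd, fderiv_clm_apply hd (differentiableAt_const _), iteratedFDeriv_two_apply]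
  simp

end Coordinates

/-- a C² harmonic function on a connected open set with `|∇v|² ≡ 1` is
affine: `v(x) = ⟨a,x⟩ + b` with `‖a‖ = 1`. -/
theorem statement15 {n : ℕ} (Ω : Set (EuclideanSpace ℝ (Fin n))) (hΩ : IsOpen Ω)
    (hconn : IsConnected Ω)
    (v : EuclideanSpace ℝ (Fin n) → ℝ)
    (hv : ContDiffOn ℝ 2 v Ω)
    (hharm : ∀ x ∈ Ω, ∑ i, pd (pd v i) i x = 0)
    (heik : ∀ x ∈ Ω, gradSq v x = 1) :
    ∃ (a : EuclideanSpace ℝ (Fin n)) (b : ℝ), ‖a‖ = 1 ∧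
      ∀ x ∈ Ω, v x = (inner ℝ a x : ℝ) + b := by
  have hharmonic : HarmonicOnNhd v Ω := fun x hx =>
    ⟨hv.contDiffAt (hΩ.mem_nhds hx), eventually_of_mem (hΩ.mem_nhds hx) fun y hy => by
      rw [laplacian_eq_sum_pd_pd (hv.contDiffAt (hΩ.mem_nhds hy)), hharm y hy, Pi.zero_apply]⟩
  have hunit : ∀ x ∈ Ω, ‖∇ v x‖ = 1 := fun x hx =>
    (pow_eq_one_iff_of_nonneg (norm_nonneg _) two_ne_zero).1
      (gradSq_eq_norm_gradient_sq ▸ heik x hx)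
  obtain ⟨a, b, hga, hvab⟩ :=
    hharmonic.exists_eq_inner_add_of_norm_gradient_eq_one hΩ hconn.isPreconnected hunit
  obtain ⟨x₀, hx₀⟩ := hconn.nonempty
  exact ⟨a, b, hga x₀ hx₀ ▸ hunit x₀ hx₀, hvab⟩
end
end
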